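/- arXiv:0801.3939 — 3 statements merged into one kernel-verified Lean document; each statement's English description precedes it below -/
import Mathlib

section
/- Let O be the ring of integers of a finite extension K of Q_p, and let R be a commutative O-algebra that is finitely generated as an O-module. Then for every x ∈ R, the sequence (x^{n!})_{n≥1} converges in the p-adic (i.e., m_O-adic) topology on R, and its limit e is an idempotent: e² = e. -/
/-!
Modulo `p ^ k` the ring `R` is finite, so there `x ^ N!` is idempotent for some `N`, and then
`x ^ n! = x ^ N!` for all `n ≥ N` because `N! ∣ n!`. Thus `x ^ n!` is `p`-adically Cauchy. Being
finite over `ℤ_p`, `R` is `p`-adically complete and separated, so `x ^ n!` has a limit `e`, which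
agrees modulo every `p ^ k` with an idempotent and is therefore idempotent. Finally `p ∈ m_O`, so
`p`-adic convergence implies `m_O`-adic convergence.
-/

open IsLocalRing

theorem pow_add_mul_eq_of_pow_add_eq {M : Type*} [Monoid M] {x : M} {i c : ℕ}
    (h : x ^ (i + c) = x ^ i) {a : ℕ} (ha : i ≤ a) (t : ℕ) : x ^ (a + t * c) = x ^ a := by
  obtain ⟨d, rfl⟩ := Nat.exists_eq_add_of_le ha
  induction t with
  | zero => simp
  | succ t ih =>
    calc x ^ (i + d + (t + 1) * c) = x ^ (i + c) * x ^ (d + t * c) := by rw [← pow_add]; ring_nf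
      _ = x ^ (i + d + t * c) := by rw [h, ← pow_add]; ring_nf
      _ = x ^ (i + d) := ih

theorem exists_isIdempotentElem_pow_factorial {M : Type*} [Monoid M] [Finite M] (x : M) :
    ∃ N : ℕ, IsIdempotentElem (x ^ N.factorial) := by
  obtain ⟨i, j, hne, hij⟩ := Finite.exists_ne_map_eq_of_infinite (fun n : ℕ ↦ x ^ n)
  wlog hlt : i < j generalizing i j
  · exact this j i hne.symm hij.symm (by omega)
  obtain ⟨c, hc0, rfl⟩ : ∃ c, 0 < c ∧ j = i + c := ⟨j - i, by omega, by omega⟩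
  obtain ⟨t, ht⟩ : c ∣ (i + c).factorial := Nat.dvd_factorial hc0 (by omega)
  refine ⟨i + c, ?_⟩
  calc x ^ (i + c).factorial * x ^ (i + c).factorial = x ^ ((i + c).factorial + t * c) := by
        rw [← pow_add, ht, mul_comm t]
    _ = x ^ (i + c).factorial := pow_add_mul_eq_of_pow_add_eq hij.symm
        ((Nat.le_add_right i c).trans (Nat.self_le_factorial _)) t

theorem IsIdempotentElem.pow_factorial_eq {M : Type*} [Monoid M] {x : M} {m n : ℕ}
    (h : IsIdempotentElem (x ^ m.factorial)) (hmn : m ≤ n) :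
    x ^ n.factorial = x ^ m.factorial := by
  obtain ⟨t, ht⟩ := Nat.factorial_dvd_factorial hmn
  obtain ⟨s, rfl⟩ : ∃ s, t = s + 1 :=
    Nat.exists_eq_succ_of_ne_zero (by rintro rfl; simp [Nat.factorial_ne_zero] at ht)
  rw [ht, pow_mul, h.pow_succ_eq]

theorem Ideal.smodEq_smul_top_iff {R : Type*} [CommRing R] (I : Ideal R) {a b : R} :
    a ≡ b [SMOD (I • ⊤ : Submodule R R)] ↔ Ideal.Quotient.mk I a = Ideal.Quotient.mk I b := by
  rw [smul_eq_mul, Ideal.mul_top]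
  rfl

theorem Ideal.finite_quotient_map {A R : Type*} [CommRing A] [CommRing R] [Algebra A R]
    [Module.Finite A R] (I : Ideal A) [Finite (A ⧸ I)] :
    Finite (R ⧸ I.map (algebraMap A R)) := by
  have : Finite (R ⧸ I • (⊤ : Submodule A R)) :=
    Submodule.finite_quotient_smul I Module.Finite.fg_top
  rw [Ideal.smul_top_eq_map] at this
  exact .of_equiv _ (Submodule.Quotient.restrictScalarsEquiv A _).toEquiv

theorem IsPrecomplete.of_finite {A M : Type*} [CommRing A] (I : Ideal A) [IsPrecomplete I A]
    [AddCommGroup M] [Module A M] [Module.Finite A M] : IsPrecomplete I M := by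
  rw [← AdicCompletion.of_surjective_iff]
  intro y
  -- `Â ⊗[A] M → M̂` is onto for finite `M`, and `Â = A` here.
  obtain ⟨t, rfl⟩ := AdicCompletion.ofTensorProduct_surjective_of_finite I M y
  induction t using TensorProduct.induction_on with
  | zero => exact ⟨0, by simp⟩
  | tmul r m =>
    obtain ⟨a, rfl⟩ := AdicCompletion.of_surjective I A r
    refine ⟨a • m, ?_⟩
    rw [AdicCompletion.ofTensorProduct_tmul, map_smul, ← algebraMap_smul (AdicCompletion I A) a]
    rfl
  | add s t hs ht =>
    obtain ⟨u, hu⟩ := hs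
    obtain ⟨v, hv⟩ := ht
    exact ⟨u + v, by simp [hu, hv]⟩

theorem exists_isIdempotentElem_pow_factorial_sub_mem {R : Type*} [CommRing R] (J : Ideal R)
    [IsAdicComplete J R] (hfin : ∀ k, Finite (R ⧸ J ^ k)) (x : R) :
    ∃ e, IsIdempotentElem e ∧ ∀ k, ∃ N : ℕ, ∀ n : ℕ, N ≤ n → x ^ n.factorial - e ∈ J ^ k := by
  choose N hN using fun k ↦ exists_isIdempotentElem_pow_factorial (Ideal.Quotient.mk (J ^ k) x)
  set N' : ℕ → ℕ := fun k ↦ (Finset.range (k + 1)).sup N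
  have hNN' (k : ℕ) : N k ≤ N' k := Finset.le_sup (by simp)
  have hN' : Monotone N' := fun k l hkl ↦ Finset.sup_mono (by simpa using hkl)
  have stable (k n : ℕ) (hn : N' k ≤ n) :
      Ideal.Quotient.mk (J ^ k) (x ^ n.factorial) =
        Ideal.Quotient.mk (J ^ k) x ^ (N k).factorial := by
    rw [map_pow]
    exact (hN k).pow_factorial_eq ((hNN' k).trans hn)
  obtain ⟨e, he⟩ := IsPrecomplete.prec (I := J) (f := fun k ↦ x ^ (N' k).factorial) inferInstance
    fun {k l} hkl ↦ (Ideal.smodEq_smul_top_iff _).mpr <| by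
      rw [stable k _ le_rfl, stable k _ (hN' hkl)]
  have mk_e (k : ℕ) :
      Ideal.Quotient.mk (J ^ k) e = Ideal.Quotient.mk (J ^ k) x ^ (N k).factorial := by
    rw [← (Ideal.smodEq_smul_top_iff _).mp (he k), stable k _ le_rfl]
  refine ⟨e, ?_, fun k ↦ ⟨N' k, fun n hn ↦ ?_⟩⟩
  · refine (IsHausdorff.eq_iff_smodEq (I := J)).mpr fun k ↦ ?_
    rw [Ideal.smodEq_smul_top_iff, map_mul, mk_e]
    exact hN k
  · rw [← Ideal.Quotient.eq, stable k n hn, mk_e]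

theorem IsLocalRing.exists_isIdempotentElem_pow_factorial_sub_mem {A R : Type*}
    [CommRing A] [IsLocalRing A] [IsNoetherianRing A] [IsPrecomplete (maximalIdeal A) A]
    [Finite (ResidueField A)] [CommRing R] [Algebra A R] [Module.Finite A R] (x : R) :
    ∃ e, IsIdempotentElem e ∧ ∀ k, ∃ N : ℕ, ∀ n : ℕ, N ≤ n →
      x ^ n.factorial - e ∈ (maximalIdeal A ^ k).map (algebraMap A R) := by
  have : IsAdicComplete ((maximalIdeal A).map (algebraMap A R)) R :=
    { toIsHausdorff := IsHausdorff.map_algebraMap_iff.mpr inferInstance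
      toIsPrecomplete := IsPrecomplete.map_algebraMap_iff.mpr (.of_finite _) }
  have hfin (k : ℕ) : Finite (R ⧸ (maximalIdeal A).map (algebraMap A R) ^ k) := by
    have : Finite (A ⧸ maximalIdeal A) := ‹Finite (ResidueField A)›
    have := Ideal.finite_quotient_pow (IsNoetherian.noetherian (maximalIdeal A)) k
    rw [← Ideal.map_pow]
    exact Ideal.finite_quotient_map _
  simpa only [Ideal.map_pow] using _root_.exists_isIdempotentElem_pow_factorial_sub_mem _ hfin x

section PadicIntegralClosure

variable (p : ℕ) [Fact p.Prime] (K : Type*) [Field K] [Algebra ℚ_[p] K]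
  [Algebra ℤ_[p] K] [IsScalarTower ℤ_[p] ℚ_[p] K]

theorem PadicInt.algebraMap_integralClosure_injective :
    Function.Injective (algebraMap ℤ_[p] (integralClosure ℤ_[p] K)) := by
  refine .of_comp (f := algebraMap (integralClosure ℤ_[p] K) K) ?_
  rw [← RingHom.coe_comp, ← IsScalarTower.algebraMap_eq,
    IsScalarTower.algebraMap_eq ℤ_[p] ℚ_[p] K, RingHom.coe_comp]
  exact (algebraMap ℚ_[p] K).injective.comp (IsFractionRing.injective ℤ_[p] ℚ_[p])

theorem PadicInt.finite_integralClosure [FiniteDimensional ℚ_[p] K] :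
    Module.Finite ℤ_[p] (integralClosure ℤ_[p] K) :=
  have : CharZero K := charZero_of_injective_algebraMap (algebraMap ℚ_[p] K).injective
  IsIntegralClosure.finite ℤ_[p] ℚ_[p] K _

end PadicIntegralClosure

/-- The idempotent limit lemma: for `O` the ring of integers of a finite extension `K`
of `ℚ_p` and `R` a commutative `O`-algebra which is finite as an `O`-module, for every
`x ∈ R` the sequence `x ^ n!` converges in the `m_O`-adic topology on `R` to an
idempotent `e`. -/
theorem stmt0 (p : ℕ) [Fact p.Prime] (K : Type*) [Field K] [Algebra ℚ_[p] K]
    [FiniteDimensional ℚ_[p] K] [Algebra ℤ_[p] K] [IsScalarTower ℤ_[p] ℚ_[p] K]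
    (O : Type*) [CommRing O] (hO : Nonempty (O ≃+* (integralClosure ℤ_[p] K)))
    [IsLocalRing O]
    (R : Type*) [CommRing R] [Algebra O R] [Module.Finite O R] (x : R) :
    ∃ e : R, e * e = e ∧
      ∀ k : ℕ, ∃ N : ℕ, ∀ n : ℕ, N ≤ n →
        x ^ n.factorial - e ∈
          Ideal.map (algebraMap O R) (IsLocalRing.maximalIdeal O ^ k) := by
  obtain ⟨ε⟩ := hO
  let _ : Algebra ℤ_[p] O := (ε.symm.toRingHom.comp (algebraMap ℤ_[p] _)).toAlgebra
  let _ : Algebra ℤ_[p] R := ((algebraMap O R).comp (algebraMap ℤ_[p] O)).toAlgebra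
  have : IsScalarTower ℤ_[p] O R := .of_algebraMap_eq' rfl
  have := PadicInt.finite_integralClosure p K
  have : Module.Finite ℤ_[p] O :=
    .equiv (AlgEquiv.ofRingEquiv (f := ε.symm) fun _ ↦ rfl).toLinearEquiv
  have : Module.Finite ℤ_[p] R := .trans O R
  have : IsLocalHom (algebraMap ℤ_[p] O) :=
    (algebraMap_isIntegral_iff.mpr inferInstance).isLocalHom
      (ε.symm.injective.comp (PadicInt.algebraMap_integralClosure_injective p K))
  have hle (k : ℕ) : (maximalIdeal ℤ_[p] ^ k).map (algebraMap ℤ_[p] R) ≤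
      (maximalIdeal O ^ k).map (algebraMap O R) := by
    rw [IsScalarTower.algebraMap_eq ℤ_[p] O R, ← Ideal.map_map, Ideal.map_pow]
    exact Ideal.map_mono (Ideal.pow_right_mono (map_maximalIdeal_le _) k)
  obtain ⟨e, he, hlim⟩ := IsLocalRing.exists_isIdempotentElem_pow_factorial_sub_mem (A := ℤ_[p]) x
  exact ⟨e, he, fun k ↦ (hlim k).imp fun N hN n hn ↦ hle k (hN n hn)⟩
end

section
/- Let R be a commutative ring and α, β, γ, δ ∈ R. Define sequences a_n = Σ_{i+j=n} α^i β^j and b_n = Σ_{i+j=n} γ^i δ^j for n ≥ 0. Then in the formal power series ring R[[X]] one has the identity (Σ_{n≥0} a_n b_n X^n)·(1 − αγX)(1 − αδX)(1 − βγX)(1 − βδX) = 1 − αβγδX². -/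
/-!
If `α ≠ β` and `γ ≠ δ` in a domain, then `(α - β) a_n = α^{n+1} - β^{n+1}` and likewise for `b_n`,
so `(α - β)(γ - δ) Σ a_n b_n X^n` is a signed sum of the four geometric series with ratios
`αγ, αδ, βγ, βδ`; clearing their denominators leaves a polynomial identity in `X`, and the factor
`(α - β)(γ - δ)` cancels. Both sides of the identity are compatible with ring homomorphisms, so the
general case is the image of the generic one over `ℤ[α, β, γ, δ]`, where the variables are distinct.
-/

open PowerSeries Finset

section

variable {R : Type*} [CommRing R]

theorem PowerSeries.mk_pow_mul_one_sub_C_mul_X (r : R) :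
    (mk fun n => r ^ n) * (1 - C r * X) = 1 := by
  simpa [rescale_X, rescale_mk] using congrArg (rescale r) (mk_one_mul_one_sub_eq_one R)

theorem sub_mul_sum_antidiagonal_pow (α β : R) (n : ℕ) :
    (α - β) * ∑ ij ∈ antidiagonal n, α ^ ij.1 * β ^ ij.2 = α ^ (n + 1) - β ^ (n + 1) := by
  rw [Nat.sum_antidiagonal_eq_sum_range_succ_mk, mul_comm]
  simpa using geom_sum₂_mul α β (n + 1)

theorem sub_mul_sub_mul_sum_antidiagonal_pow_mul (α β γ δ : R) (n : ℕ) :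
    (α - β) * (γ - δ) * ((∑ ij ∈ antidiagonal n, α ^ ij.1 * β ^ ij.2) *
      ∑ ij ∈ antidiagonal n, γ ^ ij.1 * δ ^ ij.2) =
      (α * γ) ^ (n + 1) - (α * δ) ^ (n + 1) - (β * γ) ^ (n + 1) + (β * δ) ^ (n + 1) := by
  rw [mul_mul_mul_comm, sub_mul_sum_antidiagonal_pow, sub_mul_sum_antidiagonal_pow]
  ring

noncomputable def rankinSelbergSeries (α β γ δ : R) : R⟦X⟧ :=
  mk fun n => (∑ ij ∈ antidiagonal n, α ^ ij.1 * β ^ ij.2) *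
    ∑ ij ∈ antidiagonal n, γ ^ ij.1 * δ ^ ij.2

theorem map_rankinSelbergSeries {S : Type*} [CommRing S] (φ : R →+* S) (α β γ δ : R) :
    map φ (rankinSelbergSeries α β γ δ) = rankinSelbergSeries (φ α) (φ β) (φ γ) (φ δ) := by
  ext n
  simp [rankinSelbergSeries, map_sum]

theorem C_mul_rankinSelbergSeries (α β γ δ : R) :
    C ((α - β) * (γ - δ)) * rankinSelbergSeries α β γ δ =
      C (α * γ) * mk (fun n => (α * γ) ^ n) - C (α * δ) * mk (fun n => (α * δ) ^ n) -
        C (β * γ) * mk (fun n => (β * γ) ^ n) + C (β * δ) * mk (fun n => (β * δ) ^ n) := by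
  ext n
  simp only [rankinSelbergSeries, coeff_C_mul, coeff_mk, map_add, map_sub,
    sub_mul_sub_mul_sum_antidiagonal_pow_mul]
  ring

theorem rankinSelbergSeries_mul_of_ne [IsDomain R] {α β γ δ : R} (hαβ : α ≠ β) (hγδ : γ ≠ δ) :
    rankinSelbergSeries α β γ δ * (1 - C (α * γ) * X) * (1 - C (α * δ) * X) *
      (1 - C (β * γ) * X) * (1 - C (β * δ) * X) = 1 - C (α * β * γ * δ) * X ^ 2 := by
  have hC : C ((α - β) * (γ - δ)) ≠ (0 : R⟦X⟧) :=
    (map_ne_zero_iff C C_injective).2 (mul_ne_zero (sub_ne_zero.2 hαβ) (sub_ne_zero.2 hγδ))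
  refine mul_left_cancel₀ hC ?_
  have hS := C_mul_rankinSelbergSeries α β γ δ
  have g₁ := mk_pow_mul_one_sub_C_mul_X (α * γ)
  have g₂ := mk_pow_mul_one_sub_C_mul_X (α * δ)
  have g₃ := mk_pow_mul_one_sub_C_mul_X (β * γ)
  have g₄ := mk_pow_mul_one_sub_C_mul_X (β * δ)
  simp only [map_mul, map_sub] at *
  set a := C α
  set b := C β
  set c := C γ
  set d := C δ
  linear_combination
    (1 - a * c * X) * (1 - a * d * X) * (1 - b * c * X) * (1 - b * d * X) * hS +
      a * c * ((1 - a * d * X) * (1 - b * c * X) * (1 - b * d * X)) * g₁ -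
      a * d * ((1 - a * c * X) * (1 - b * c * X) * (1 - b * d * X)) * g₂ -
      b * c * ((1 - a * c * X) * (1 - a * d * X) * (1 - b * d * X)) * g₃ +
      b * d * ((1 - a * c * X) * (1 - a * d * X) * (1 - b * c * X)) * g₄

theorem rankinSelbergSeries_mul (α β γ δ : R) :
    rankinSelbergSeries α β γ δ * (1 - C (α * γ) * X) * (1 - C (α * δ) * X) *
      (1 - C (β * γ) * X) * (1 - C (β * δ) * X) = 1 - C (α * β * γ * δ) * X ^ 2 := by
  have hX : Function.Injective (MvPolynomial.X : Fin 4 → MvPolynomial (Fin 4) ℤ) :=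
    MvPolynomial.X_injective
  have generic := rankinSelbergSeries_mul_of_ne (hX.ne (by decide : (0 : Fin 4) ≠ 1))
    (hX.ne (by decide : (2 : Fin 4) ≠ 3))
  simpa [map_rankinSelbergSeries] using
    congrArg (PowerSeries.map (MvPolynomial.aeval ![α, β, γ, δ]).toRingHom) generic

end

/-- The Rankin–Selberg local identity: with
`a_n = Σ_{i+j=n} α^i β^j` and `b_n = Σ_{i+j=n} γ^i δ^j`, one has
`(Σ a_n b_n X^n)(1−αγX)(1−αδX)(1−βγX)(1−βδX) = 1 − αβγδ X²` in `R⟦X⟧`. -/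
theorem stmt4 (R : Type*) [CommRing R] (α β γ δ : R) (a b : ℕ → R)
    (ha : ∀ n : ℕ, a n = ∑ ij ∈ Finset.HasAntidiagonal.antidiagonal n, α ^ ij.1 * β ^ ij.2)
    (hb : ∀ n : ℕ, b n = ∑ ij ∈ Finset.HasAntidiagonal.antidiagonal n, γ ^ ij.1 * δ ^ ij.2) :
    (PowerSeries.mk fun n => a n * b n) *
        (1 - PowerSeries.C (R := R) (α * γ) * PowerSeries.X) *
        (1 - PowerSeries.C (R := R) (α * δ) * PowerSeries.X) *
        (1 - PowerSeries.C (R := R) (β * γ) * PowerSeries.X) *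
        (1 - PowerSeries.C (R := R) (β * δ) * PowerSeries.X) =
      1 - PowerSeries.C (R := R) (α * β * γ * δ) * PowerSeries.X ^ 2 := by
  have hab : (mk fun n => a n * b n) = rankinSelbergSeries α β γ δ := by
    ext n
    simp [rankinSelbergSeries, ha, hb]
  rw [hab]
  exact rankinSelbergSeries_mul α β γ δ
end

section
/- Let k ≥ 1, p a prime, and g : ℍ → ℂ with g|_k τ_{Mp} = W·g for some M, W, where τ_X = (0,−1;X,0) and g|[p](z) = g(pz). Then (g − g|[p]) |_k τ_{Mp²} = −p^{−k/2} · W · (g − p^k · g|[p]). -/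
/-!
Since `τ_{Mp²} = τ_{Mp} ∘ [p]` and `[p] ∘ τ_{Mp²} = τ_{Mp}` as Möbius maps, the eigenvalue relation
at `p z` produces the `g` term and the one at `z` the `g|[p]` term of the depleted form; what is
left is bookkeeping of the powers of `p`, for which `(x p)^s = x^s p^s` holds for every `x` because
`p` is a positive real.
-/

namespace Complex

theorem mul_ofReal_cpow (x : ℂ) {r : ℝ} (hr : 0 ≤ r) (s : ℂ) :
    (x * r) ^ s = x ^ s * (r : ℂ) ^ s := by
  rcases eq_or_ne s 0 with rfl | hs
  · simp
  rcases eq_or_ne x 0 with rfl | hx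
  · simp [zero_cpow hs]
  rcases hr.eq_or_lt with rfl | hr
  · simp [zero_cpow hs]
  have hr' : (r : ℂ) ≠ 0 := ofReal_ne_zero.2 hr.ne'
  rw [cpow_def_of_ne_zero (mul_ne_zero hx hr'), log_mul_ofReal r hr x hx, ofReal_log hr.le,
    add_comm, add_mul, exp_add, ← cpow_def_of_ne_zero hx, ← cpow_def_of_ne_zero hr']

theorem cpow_half_mul_zpow_neg {x : ℂ} (hx : x ≠ 0) (k : ℕ) :
    x ^ ((k : ℂ) / 2) * x ^ (-(k : ℤ)) = x ^ (-(k : ℂ) / 2) := by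
  rw [← cpow_intCast, ← cpow_add _ _ hx]
  push_cast
  ring_nf

theorem cpow_neg_half_mul_pow {x : ℂ} (hx : x ≠ 0) (k : ℕ) :
    x ^ (-(k : ℂ) / 2) * x ^ k = x ^ ((k : ℂ) / 2) := by
  rw [← cpow_natCast, ← cpow_add _ _ hx]
  ring_nf

end Complex

open Complex in
theorem stmt6_general (k : ℕ) (p : ℕ) (hp : p.Prime) (g : ℂ → ℂ)
    (M : ℝ) (W : ℂ)
    (hg : ∀ z : ℂ, 0 < z.im →
      ((M : ℂ) * p) ^ ((k : ℂ) / 2) * (((M : ℂ) * p) * z) ^ (-(k : ℤ)) *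
          g (-1 / (((M : ℂ) * p) * z)) = W * g z) :
    ∀ z : ℂ, 0 < z.im →
      ((M : ℂ) * p ^ 2) ^ ((k : ℂ) / 2) * (((M : ℂ) * p ^ 2) * z) ^ (-(k : ℤ)) *
          (g (-1 / (((M : ℂ) * p ^ 2) * z)) - g ((p : ℂ) * (-1 / (((M : ℂ) * p ^ 2) * z)))) =
        -((p : ℂ) ^ (-(k : ℂ) / 2)) * W * (g z - (p : ℂ) ^ k * g ((p : ℂ) * z)) := by
  intro z hz
  have hp0 : (p : ℂ) ≠ 0 := Nat.cast_ne_zero.2 hp.ne_zero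
  have hpz : 0 < ((p : ℂ) * z).im := by
    simpa [mul_im] using mul_pos (Nat.cast_pos.2 hp.pos) hz
  have hgz := hg z hz
  have hgpz := hg (p * z) hpz
  set v := (M : ℂ) * p * z
  have hlevel_arg : (M : ℂ) * p ^ 2 * z = v * p := by ring
  rw [show (M : ℂ) * p * (p * z) = v * p by ring, mul_zpow] at hgpz
  have hp_fricke : (p : ℂ) * (-1 / (v * p)) = -1 / v := by field_simp
  have hlevel : ((M : ℂ) * p ^ 2) ^ ((k : ℂ) / 2) =
      ((M : ℂ) * p) ^ ((k : ℂ) / 2) * (p : ℂ) ^ ((k : ℂ) / 2) := by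
    rw [sq, ← mul_assoc, ← ofReal_natCast, mul_ofReal_cpow _ p.cast_nonneg]
  rw [hlevel_arg, hp_fricke, hlevel, mul_zpow]
  linear_combination (p : ℂ) ^ ((k : ℂ) / 2) * hgpz - (p : ℂ) ^ (-(k : ℂ) / 2) * hgz
    - ((M : ℂ) * p) ^ ((k : ℂ) / 2) * v ^ (-(k : ℤ)) * g (-1 / v) * cpow_half_mul_zpow_neg hp0 k
    - W * g (p * z) * cpow_neg_half_mul_pow hp0 k

/-- If `g|_k τ_{Mp} = W·g` then `(g − g|[p]) |_k τ_{Mp²} = −p^{−k/2}·W·(g − p^k·g|[p])`,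
where `τ_X = (0,−1;X,0)`, `g|[p](z) = g(pz)` and the weight-`k` slash action is
normalized with the `det^{k/2}` factor; all slash actions are written out explicitly. -/
theorem stmt6 (k : ℕ) (hk : 1 ≤ k) (p : ℕ) (hp : p.Prime) (g : ℂ → ℂ)
    (M : ℝ) (hM : 0 < M) (W : ℂ)
    (hg : ∀ z : ℂ, 0 < z.im →
      ((M : ℂ) * p) ^ ((k : ℂ) / 2) * (((M : ℂ) * p) * z) ^ (-(k : ℤ)) *
          g (-1 / (((M : ℂ) * p) * z)) = W * g z) :
    ∀ z : ℂ, 0 < z.im →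
      ((M : ℂ) * p ^ 2) ^ ((k : ℂ) / 2) * (((M : ℂ) * p ^ 2) * z) ^ (-(k : ℤ)) *
          (g (-1 / (((M : ℂ) * p ^ 2) * z)) - g ((p : ℂ) * (-1 / (((M : ℂ) * p ^ 2) * z)))) =
        -((p : ℂ) ^ (-(k : ℂ) / 2)) * W * (g z - (p : ℂ) ^ k * g ((p : ℂ) * z)) :=
  stmt6_general k p hp g M W hg
end
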